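/- arXiv:1710.01805 — 2 statements merged into one kernel-verified Lean document; each statement's English description precedes it below -/
import Mathlib

section
/- Let I ⊂ J be ideals in a Noetherian ring B. Then I is a reduction of J (meaning I·J^n = J^{n+1} for some n ≥ 0) if and only if the inclusion of Rees algebras B[IW] ⊂ B[JW] inside B[W] is a finite (module-finite) ring extension. -/
/-!
When `I ≤ J`, the powers of `J` form an `I`-filtration of `B`, and its associated
`B[IW]`-submodule `⨁ Jⁿ Wⁿ` of `B[W]` is `B[JW]` itself. Since each `Jⁿ` is finitely generated,
this module is finite over `B[IW]` exactly when the filtration is `I`-stable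
(`Ideal.Filtration.submodule_fg_iff_stable`), and stability is the reduction condition.
-/

open Polynomial

section

variable {R : Type*} [CommRing R] {I J : Ideal R}

theorem reesAlgebra_mono (hIJ : I ≤ J) : reesAlgebra I ≤ reesAlgebra J := fun f hf =>
  (mem_reesAlgebra_iff J f).2 fun i =>
    Ideal.pow_right_mono hIJ i ((mem_reesAlgebra_iff I f).1 hf i)

namespace Ideal

def powFiltration (hIJ : I ≤ J) : I.Filtration R where
  N i := J ^ i
  mono i := pow_le_pow_right (Nat.le_succ i)
  smul_le i := by rw [smul_eq_mul, pow_succ']; exact mul_mono_left hIJ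

theorem powFiltration_stable_iff (hIJ : I ≤ J) :
    (powFiltration hIJ).Stable ↔ ∃ n, I * J ^ n = J ^ (n + 1) := by
  refine ⟨fun ⟨n, hn⟩ => ⟨n, hn n le_rfl⟩, fun ⟨n, hn⟩ => ⟨n, fun m hm => ?_⟩⟩
  obtain ⟨k, rfl⟩ := Nat.exists_eq_add_of_le hm
  change I * J ^ (n + k) = J ^ (n + k + 1)
  rw [add_right_comm, pow_add, pow_add, ← mul_assoc, hn]

end Ideal

open PolynomialModule in
theorem finite_reesAlgebra_inclusion_iff (hIJ : I ≤ J) :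
    (Subalgebra.inclusion (reesAlgebra_mono hIJ)).toRingHom.Finite ↔
      (Ideal.powFiltration hIJ).submodule.FG := by
  let _ := (Subalgebra.inclusion (reesAlgebra_mono hIJ)).toRingHom.toAlgebra
  let e : (Ideal.powFiltration hIJ).submodule ≃ₗ[reesAlgebra I] reesAlgebra J :=
    { toFun x := ⟨equivPolynomialSelf (x : PolynomialModule R R), x.2⟩
      invFun p := ⟨equivPolynomialSelf.symm (p : R[X]), p.2⟩
      map_add' x y := Subtype.ext (map_add equivPolynomialSelf (x : PolynomialModule R R) y)
      map_smul' r x :=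
        Subtype.ext (map_smul equivPolynomialSelf (r : R[X]) (x : PolynomialModule R R))
      left_inv x := Subtype.ext (equivPolynomialSelf.symm_apply_apply (x : PolynomialModule R R))
      right_inv p := Subtype.ext (equivPolynomialSelf.apply_symm_apply (p : R[X])) }
  rw [← Module.Finite.iff_fg]
  exact (Module.Finite.equiv_iff e).symm

end

/-- Reduction iff the inclusion of Rees algebras `B[IW] ⊆ B[JW]` inside `B[W]`
is a module-finite ring extension. -/
theorem reduction_iff_reesAlgebra_finite
    (B : Type*) [CommRing B] [IsNoetherianRing B] (I J : Ideal B) (hIJ : I ≤ J) :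
    (∃ n : ℕ, I * J ^ n = J ^ (n + 1)) ↔
      RingHom.Finite (Subalgebra.inclusion
        (show reesAlgebra I ≤ reesAlgebra J from fun f hf =>
          (mem_reesAlgebra_iff J f).2 fun i =>
            Ideal.pow_right_mono hIJ i ((mem_reesAlgebra_iff I f).1 hf i))).toRingHom := by
  rw [← Ideal.powFiltration_stable_iff hIJ,
    ← Ideal.Filtration.submodule_fg_iff_stable _ fun _ => IsNoetherian.noetherian _]
  exact (finite_reesAlgebra_inclusion_iff hIJ).symm
end

section
/- Let γ : B → B' be a ring homomorphism, I ⊂ B and J ⊂ B' ideals with γ(I)B' a reduction of J, and let X' be the blow up of Spec(B') at J. Then γ(I)·𝒪_{X'} = J·𝒪_{X'}; in particular γ(I)·𝒪_{X'} is an invertible sheaf of ideals on X'. -/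
open AlgebraicGeometry CategoryTheory TopologicalSpace

/-- For a morphism `f : Y ⟶ Spec R` and an ideal `I ⊆ R`, the ideal `I·𝒪_{Y,y}` of the
stalk at `y` generated by the pullback of `I`. -/
noncomputable def pulledIdealAt (R : CommRingCat) (I : Ideal R) {Y : Scheme}
    (f : Y ⟶ Spec R) (y : Y) : Ideal (Y.presheaf.stalk y) :=
  I.map ((Scheme.ΓSpecIso R).inv ≫ f.appTop ≫ Y.presheaf.germ ⊤ y (Opens.mem_top y) :
    R ⟶ Y.presheaf.stalk y).hom

/-- `I·𝒪_Y` is an invertible sheaf of ideals: at every point the pulled back ideal of the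
stalk is principal, generated by a nonzerodivisor. -/
def IsInvertiblePulledIdeal (R : CommRingCat) (I : Ideal R) {Y : Scheme}
    (f : Y ⟶ Spec R) : Prop :=
  ∀ y : Y, ∃ a : Y.presheaf.stalk y,
    pulledIdealAt R I f y = Ideal.span {a} ∧ a ∈ nonZeroDivisors (Y.presheaf.stalk y)

/-- `π : X ⟶ Spec R` is the blow up of `Spec R` at `I`: the pullback of `I` to `X` is an
invertible ideal sheaf, and `π` is universal with this property. -/
def IsBlowUp (R : CommRingCat) (I : Ideal R) {X : Scheme} (π : X ⟶ Spec R) : Prop :=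
  IsInvertiblePulledIdeal R I π ∧
    ∀ {Y : Scheme} (f : Y ⟶ Spec R), IsInvertiblePulledIdeal R I f →
      ∃! g : Y ⟶ X, g ≫ π = f

/-! At a point of the blow up, `J` pulls back to `(a)` with `a` a nonzerodivisor, so the
reduction equation becomes `γ(I)·(aⁿ) = (a)·(aⁿ)` in the stalk, and `aⁿ` cancels. -/

open scoped nonZeroDivisors

theorem Ideal.mul_span_singleton_left_mono_of_mem_nonZeroDivisors {R : Type*} [CommRing R]
    {I J : Ideal R} {x : R} (hx : x ∈ R⁰) : I * Ideal.span {x} ≤ J * Ideal.span {x} ↔ I ≤ J := by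
  simp [SetLike.le_def, Ideal.mem_mul_span_singleton, mul_cancel_right_mem_nonZeroDivisors hx]

theorem Ideal.mul_span_singleton_left_inj_of_mem_nonZeroDivisors {R : Type*} [CommRing R]
    {I J : Ideal R} {x : R} (hx : x ∈ R⁰) : I * Ideal.span {x} = J * Ideal.span {x} ↔ I = J := by
  simp only [le_antisymm_iff, Ideal.mul_span_singleton_left_mono_of_mem_nonZeroDivisors hx]

theorem Ideal.eq_span_singleton_of_mul_pow_eq_pow_succ {R : Type*} [CommRing R]
    {K : Ideal R} {a : R} (ha : a ∈ R⁰) {n : ℕ}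
    (h : K * Ideal.span {a} ^ n = Ideal.span {a} ^ (n + 1)) : K = Ideal.span {a} := by
  rw [pow_succ', Ideal.span_singleton_pow] at h
  exact (Ideal.mul_span_singleton_left_inj_of_mem_nonZeroDivisors (pow_mem ha n)).mp h

theorem pulledIdealAt_eq_of_reduction {R : CommRingCat} {K J : Ideal R} {Y : Scheme}
    {f : Y ⟶ Spec R} (hJ : IsInvertiblePulledIdeal R J f) {n : ℕ}
    (hred : K * J ^ n = J ^ (n + 1)) (y : Y) : pulledIdealAt R K f y = pulledIdealAt R J f y := by
  obtain ⟨a, ha, ha_reg⟩ := hJ y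
  have hred_y : pulledIdealAt R K f y * pulledIdealAt R J f y ^ n =
      pulledIdealAt R J f y ^ (n + 1) := by
    simp only [pulledIdealAt, ← Ideal.map_pow, ← Ideal.map_mul, hred]
  rw [ha] at hred_y ⊢
  exact Ideal.eq_span_singleton_of_mul_pow_eq_pow_succ ha_reg hred_y

theorem IsInvertiblePulledIdeal.of_pulledIdealAt_eq {R : CommRingCat} {K J : Ideal R}
    {Y : Scheme} {f : Y ⟶ Spec R} (hJ : IsInvertiblePulledIdeal R J f)
    (h : ∀ y, pulledIdealAt R K f y = pulledIdealAt R J f y) : IsInvertiblePulledIdeal R K f :=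
  fun y => h y ▸ hJ y

/-- Let `γ : B → B'` and `I ⊆ B`, `J ⊆ B'` ideals with `γ(I)B'` a reduction of `J`, and let
`X'` be the blow up of `Spec B'` at `J`.  Then `γ(I)·𝒪_{X'} = J·𝒪_{X'}`; in particular
`γ(I)·𝒪_{X'}` is an invertible sheaf of ideals on `X'`. -/
theorem pulled_ideal_of_reduction_eq_on_blowup
    (B B' : CommRingCat) (γ : B ⟶ B') (I : Ideal B) (J : Ideal B')
    (hred : ∃ n : ℕ, I.map (γ.hom : B →+* B') * J ^ n = J ^ (n + 1))
    (X' : Scheme) (π' : X' ⟶ Spec B') (hX' : IsBlowUp B' J π') :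
    (∀ y : X', pulledIdealAt B' (I.map (γ.hom : B →+* B')) π' y = pulledIdealAt B' J π' y)
      ∧ IsInvertiblePulledIdeal B' (I.map (γ.hom : B →+* B')) π' := by
  obtain ⟨n, hn⟩ := hred
  have heq := pulledIdealAt_eq_of_reduction hX'.1 hn
  exact ⟨heq, hX'.1.of_pulledIdealAt_eq heq⟩
end
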